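/- arXiv:2105.10623 — 7 statements merged into one kernel-verified Lean document; each statement's English description precedes it below -/
import Mathlib

section
/- Leinert's condition (L): σ̄(0) ≥ 0 holds if and only if: the law of one price (LOP) holds, the hedging functional I is positive, and for every f ∈ E one has I(f) ≤ Ī(f⁺), where Ī is the superhedging operator using positive generalized portfolios. Moreover, under (L), σ̄(f) = I(f) for every f ∈ E and Ī(f) = I(f) for every f ∈ E⁺. -/
open Filter
open scoped ENNReal

noncomputable section

/-- A simple portfolio: an initial endowment `V`, a maturity `n`, and
nonanticipating position functions `H i`. -/
structure SimplePortfolio where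
  V : ℝ
  n : ℕ
  H : ℕ → (ℕ → ℝ) → ℝ
  nonanticipating : ∀ i, ∀ S S' : ℕ → ℝ, (∀ k, k ≤ i → S k = S' k) → H i S = H i S'

namespace SimplePortfolio

/-- Wealth process at time `j`. -/
def wealthAt (P : SimplePortfolio) (j : ℕ) (S : ℕ → ℝ) : ℝ :=
  P.V + ∑ i ∈ Finset.range (min j P.n), P.H i S * (S (i + 1) - S i)

/-- Terminal wealth `Π_∞`. -/
def wealth (P : SimplePortfolio) (S : ℕ → ℝ) : ℝ :=
  P.V + ∑ i ∈ Finset.range P.n, P.H i S * (S (i + 1) - S i)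

/-- A positive simple portfolio relative to the trajectory set `𝒮`. -/
def Positive (𝒮 : Set (ℕ → ℝ)) (P : SimplePortfolio) : Prop :=
  0 ≤ P.V ∧ ∀ S ∈ 𝒮, 0 ≤ P.wealth S

end SimplePortfolio

/-- A generalized portfolio: a sequence of simple portfolios, positive for `m ≥ 1`. -/
def IsGenPortfolio (𝒮 : Set (ℕ → ℝ)) (P : ℕ → SimplePortfolio) : Prop :=
  ∀ m, 1 ≤ m → (P m).Positive 𝒮

/-- Total terminal wealth of a generalized portfolio, valued in `(-∞, +∞]`. -/
def totalWealth (P : ℕ → SimplePortfolio) (S : ℕ → ℝ) : EReal :=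
  ((P 0).wealth S : EReal) + ((∑' m, ENNReal.ofReal ((P (m + 1)).wealth S) : ℝ≥0∞) : EReal)

/-- Total initial endowment of a generalized portfolio, valued in `(-∞, +∞]`. -/
def totalEndow (P : ℕ → SimplePortfolio) : EReal :=
  ((P 0).V : EReal) + ((∑' m, ENNReal.ofReal ((P (m + 1)).V) : ℝ≥0∞) : EReal)

/-- The superhedging operator `σ̄` using generalized portfolios. -/
def sigmaBar (𝒮 : Set (ℕ → ℝ)) (f : (ℕ → ℝ) → EReal) : EReal :=
  sInf {c : EReal | ∃ P : ℕ → SimplePortfolio, IsGenPortfolio 𝒮 P ∧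
    (∀ S ∈ 𝒮, f S ≤ totalWealth P S) ∧ c = totalEndow P}

/-- The superhedging operator `Ī` using positive generalized portfolios. -/
def IBar (𝒮 : Set (ℕ → ℝ)) (f : (ℕ → ℝ) → EReal) : EReal :=
  sInf {c : EReal | ∃ P : ℕ → SimplePortfolio, (∀ m, (P m).Positive 𝒮) ∧
    (∀ S ∈ 𝒮, f S ≤ ((∑' m, ENNReal.ofReal ((P m).wealth S) : ℝ≥0∞) : EReal)) ∧
    c = ((∑' m, ENNReal.ofReal ((P m).V) : ℝ≥0∞) : EReal)}

/-- The trajectory-wise Law of One Price (LOP). -/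
def LOP (𝒮 : Set (ℕ → ℝ)) : Prop :=
  ∀ P Q : SimplePortfolio, (∀ S ∈ 𝒮, P.wealth S = Q.wealth S) → P.V = Q.V

/-- Positivity of the elementary hedging functional `I`:
any simple portfolio whose terminal wealth is nonnegative on `𝒮` (i.e. an element of `E⁺`)
has nonnegative initial endowment (price). -/
def IPos (𝒮 : Set (ℕ → ℝ)) : Prop :=
  ∀ P : SimplePortfolio, (∀ S ∈ 𝒮, 0 ≤ P.wealth S) → 0 ≤ P.V

/-- Leinert's condition (L): `σ̄(0) ≥ 0`. -/
def LeinertCond (𝒮 : Set (ℕ → ℝ)) : Prop := 0 ≤ sigmaBar 𝒮 (fun _ => 0)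

/-- König's condition (K): `I(f) + Ī(f⁻) ≤ Ī(f⁺)` for all `f ∈ E`. -/
def KoenigCond (𝒮 : Set (ℕ → ℝ)) : Prop :=
  ∀ P : SimplePortfolio,
    (P.V : EReal) + IBar 𝒮 (fun S => ((max (-(P.wealth S)) 0 : ℝ) : EReal))
      ≤ IBar 𝒮 (fun S => ((max (P.wealth S) 0 : ℝ) : EReal))

/-- The seminorm `‖f‖ = Ī(|f|)`. -/
def pnorm (𝒮 : Set (ℕ → ℝ)) (f : (ℕ → ℝ) → ℝ) : EReal :=
  IBar 𝒮 (fun S => ((|f S| : ℝ) : EReal))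

/-- Null sets with respect to the seminorm `‖·‖`. -/
def NullSet (𝒮 : Set (ℕ → ℝ)) (A : Set (ℕ → ℝ)) : Prop :=
  IBar 𝒮 (A.indicator fun _ => (1 : EReal)) = 0

/-- The shifted conditional space `𝒮^{(S,j)}`. -/
def shiftedSpace (𝒮 : Set (ℕ → ℝ)) (S : ℕ → ℝ) (j : ℕ) : Set (ℕ → ℝ) :=
  {T | ∃ S' ∈ 𝒮, (∀ i, i ≤ j → S' i = S i) ∧ ∀ i, T i = S' (j + i)}

/-- Leinert's condition at every node (nL). -/
def NodewiseL (𝒮 : Set (ℕ → ℝ)) : Prop :=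
  ∀ S ∈ 𝒮, ∀ j : ℕ, LeinertCond (shiftedSpace 𝒮 S j)

/-- König's condition (together with (LOP)) at every node (nK). -/
def NodewiseK (𝒮 : Set (ℕ → ℝ)) : Prop :=
  ∀ S ∈ 𝒮, ∀ j : ℕ, LOP (shiftedSpace 𝒮 S j) ∧ KoenigCond (shiftedSpace 𝒮 S j)

/-- `S'` agrees with `S` up to time `j`. -/
def agreesUpTo (S S' : ℕ → ℝ) (j : ℕ) : Prop := ∀ i, i ≤ j → S' i = S i

/-- The node `𝒮_{(S,j)}` is flat. -/
def FlatNode (𝒮 : Set (ℕ → ℝ)) (S : ℕ → ℝ) (j : ℕ) : Prop :=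
  ∀ S' ∈ 𝒮, agreesUpTo S S' j → S' (j + 1) = S j

/-- The node `𝒮_{(S,j)}` is an arbitrage node. -/
def ArbNode (𝒮 : Set (ℕ → ℝ)) (S : ℕ → ℝ) (j : ℕ) : Prop :=
  ∃ ε : ℝ, (ε = 1 ∨ ε = -1) ∧
    (∀ S' ∈ 𝒮, agreesUpTo S S' j → 0 ≤ ε * (S' (j + 1) - S j)) ∧
    ∃ S' ∈ 𝒮, agreesUpTo S S' j ∧ 0 < ε * (S' (j + 1) - S j)

/-- Arbitrage node of type I. -/
def TypeINode (𝒮 : Set (ℕ → ℝ)) (S : ℕ → ℝ) (j : ℕ) : Prop :=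
  ArbNode 𝒮 S j ∧ ∃ S' ∈ 𝒮, agreesUpTo S S' j ∧ S' (j + 1) = S j

/-- Arbitrage node of type II. -/
def TypeIINode (𝒮 : Set (ℕ → ℝ)) (S : ℕ → ℝ) (j : ℕ) : Prop :=
  ArbNode 𝒮 S j ∧ ¬ ∃ S' ∈ 𝒮, agreesUpTo S S' j ∧ S' (j + 1) = S j

/-- Up-down node: neither flat nor an arbitrage node. -/
def UpDownNode (𝒮 : Set (ℕ → ℝ)) (S : ℕ → ℝ) (j : ℕ) : Prop :=
  ¬ FlatNode 𝒮 S j ∧ ¬ ArbNode 𝒮 S j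

/-- The set `N` of trajectories moving at a type I arbitrage node. -/
def NSet (𝒮 : Set (ℕ → ℝ)) : Set (ℕ → ℝ) :=
  {S | S ∈ 𝒮 ∧ ∃ j : ℕ, TypeINode 𝒮 S j ∧ S (j + 1) ≠ S j}

/-- The set `N_n` of trajectories moving at a type I arbitrage node before time `n`. -/
def NSetUpTo (𝒮 : Set (ℕ → ℝ)) (n : ℕ) : Set (ℕ → ℝ) :=
  {S | S ∈ 𝒮 ∧ ∃ j < n, TypeINode 𝒮 S j ∧ S (j + 1) ≠ S j}

/-- Membership in `L¹_(L)`: `f` has finite norm and is a `‖·‖`-limit of elements of `E'`. -/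
def MemL1L (𝒮 : Set (ℕ → ℝ)) (f : (ℕ → ℝ) → ℝ) : Prop :=
  pnorm 𝒮 f < ⊤ ∧
  ∃ P : ℕ → SimplePortfolio, (∀ m, pnorm 𝒮 ((P m).wealth) < ⊤) ∧
    Tendsto (fun m => pnorm 𝒮 (fun S => f S - (P m).wealth S)) atTop (nhds 0)

/-- Membership in `L¹_(K)`: the outer and inner integrals agree and are finite. -/
def MemL1K (𝒮 : Set (ℕ → ℝ)) (f : (ℕ → ℝ) → ℝ) : Prop :=
  ∃ c : ℝ, sigmaBar 𝒮 (fun S => ((f S : ℝ) : EReal)) = (c : EReal) ∧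
    sigmaBar 𝒮 (fun S => ((-f S : ℝ) : EReal)) = ((-c : ℝ) : EReal)

/-- `f` has finite maturity: it depends only on an initial segment of the trajectory. -/
def FiniteMaturity (𝒮 : Set (ℕ → ℝ)) (f : (ℕ → ℝ) → ℝ) : Prop :=
  ∃ n : ℕ, ∀ S ∈ 𝒮, ∀ S' ∈ 𝒮, (∀ i, i ≤ n → S i = S' i) → f S = f S'

/- Auxiliary material -/

section Aux

open SimplePortfolio

/-- The zero portfolio. -/
def zeroP : SimplePortfolio := ⟨0, 0, fun _ _ => 0, fun _ _ _ _ => rfl⟩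

@[simp] lemma zeroP_wealth (S : ℕ → ℝ) : zeroP.wealth S = 0 := by
  simp [SimplePortfolio.wealth, zeroP]

@[simp] lemma zeroP_V : zeroP.V = 0 := rfl

lemma zeroP_positive (𝒮 : Set (ℕ → ℝ)) : zeroP.Positive 𝒮 :=
  ⟨le_refl 0, fun S _ => le_of_eq (zeroP_wealth S).symm⟩

/-- Negation of a portfolio. -/
def negP (P : SimplePortfolio) : SimplePortfolio :=
  ⟨-P.V, P.n, fun i S => -(P.H i S), fun i S S' h => by
    simp only [P.nonanticipating i S S' h]⟩

@[simp] lemma negP_wealth (P : SimplePortfolio) (S : ℕ → ℝ) :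
    (negP P).wealth S = -(P.wealth S) := by
  simp only [SimplePortfolio.wealth, negP, neg_mul, Finset.sum_neg_distrib, neg_add]

@[simp] lemma negP_V (P : SimplePortfolio) : (negP P).V = -P.V := rfl

lemma sum_ite_range {n N : ℕ} (h : n ≤ N) (f : ℕ → ℝ) :
    ∑ i ∈ Finset.range N, (if i < n then f i else 0) = ∑ i ∈ Finset.range n, f i := by
  rw [← Finset.sum_subset (Finset.range_subset_range.2 h)
    (fun x _ hx => if_neg (by simpa using hx))]
  exact Finset.sum_congr rfl fun x hx => if_pos (Finset.mem_range.1 hx)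

/-- Difference of two portfolios. -/
def subP (P Q : SimplePortfolio) : SimplePortfolio where
  V := P.V - Q.V
  n := max P.n Q.n
  H := fun i S => (if i < P.n then P.H i S else 0) - (if i < Q.n then Q.H i S else 0)
  nonanticipating := fun i S S' h => by
    simp only [P.nonanticipating i S S' h, Q.nonanticipating i S S' h]

@[simp] lemma subP_V (P Q : SimplePortfolio) : (subP P Q).V = P.V - Q.V := rfl

@[simp] lemma subP_wealth (P Q : SimplePortfolio) (S : ℕ → ℝ) :
    (subP P Q).wealth S = P.wealth S - Q.wealth S := by
  simp only [SimplePortfolio.wealth, subP, sub_mul, ite_mul, zero_mul,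
    Finset.sum_sub_distrib]
  rw [sum_ite_range (le_max_left P.n Q.n), sum_ite_range (le_max_right P.n Q.n)]
  ring

/-- Prepend a portfolio to a sequence of portfolios. -/
def consP (A : SimplePortfolio) (Q : ℕ → SimplePortfolio) : ℕ → SimplePortfolio
  | 0 => A
  | m + 1 => Q m

@[simp] lemma consP_zero (A : SimplePortfolio) (Q : ℕ → SimplePortfolio) :
    consP A Q 0 = A := rfl

@[simp] lemma consP_succ (A : SimplePortfolio) (Q : ℕ → SimplePortfolio) (m : ℕ) :
    consP A Q (m + 1) = Q m := rfl

lemma totalWealth_consP (A : SimplePortfolio) (Q : ℕ → SimplePortfolio) (S : ℕ → ℝ) :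
    totalWealth (consP A Q) S = ((A.wealth S : ℝ) : EReal) +
      ((∑' m, ENNReal.ofReal ((Q m).wealth S) : ℝ≥0∞) : EReal) := rfl

lemma totalEndow_consP (A : SimplePortfolio) (Q : ℕ → SimplePortfolio) :
    totalEndow (consP A Q) = ((A.V : ℝ) : EReal) +
      ((∑' m, ENNReal.ofReal ((Q m).V) : ℝ≥0∞) : EReal) := rfl

lemma isGen_consP {𝒮 : Set (ℕ → ℝ)} (A : SimplePortfolio) {Q : ℕ → SimplePortfolio}
    (h : ∀ m, (Q m).Positive 𝒮) : IsGenPortfolio 𝒮 (consP A Q) := by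
  intro m hm
  match m, hm with
  | m + 1, _ => exact h m

@[simp] lemma tsum_zeroP_wealth (S : ℕ → ℝ) :
    (∑' _ : ℕ, ENNReal.ofReal (zeroP.wealth S)) = 0 := by simp

@[simp] lemma tsum_zeroP_V : (∑' _ : ℕ, ENNReal.ofReal (zeroP.V)) = 0 := by simp

lemma ennreal_coe_eq (x : ℝ≥0∞) (hx : x ≠ ⊤) :
    ((x : EReal)) = ((x.toReal : ℝ) : EReal) := by
  conv_lhs => rw [← ENNReal.ofReal_toReal hx]
  rw [EReal.coe_ennreal_ofReal, max_eq_left ENNReal.toReal_nonneg]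

lemma ereal_helper (a b : ℝ) (x : ℝ≥0∞) :
    (b : EReal) ≤ (a : EReal) + (x : EReal) ↔
      (0 : EReal) ≤ ((a - b : ℝ) : EReal) + (x : EReal) := by
  rcases eq_or_ne x ⊤ with rfl | hx
  · simp only [EReal.coe_ennreal_top,
      EReal.add_top_of_ne_bot (EReal.coe_ne_bot a),
      EReal.add_top_of_ne_bot (EReal.coe_ne_bot (a - b))]
    exact ⟨fun _ => le_top, fun _ => le_top⟩
  · rw [ennreal_coe_eq x hx, ← EReal.coe_add, ← EReal.coe_add,
      ← EReal.coe_zero, EReal.coe_le_coe_iff, EReal.coe_le_coe_iff]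
    constructor <;> intro h <;> linarith

lemma ereal_helper2 (w : ℝ) (x : ℝ≥0∞)
    (h : (0 : EReal) ≤ (w : EReal) + (x : EReal)) :
    ((max (-w) 0 : ℝ) : EReal) ≤ (x : EReal) := by
  rcases eq_or_ne x ⊤ with rfl | hx
  · exact le_top
  · rw [ennreal_coe_eq x hx] at h ⊢
    rw [← EReal.coe_add, ← EReal.coe_zero, EReal.coe_le_coe_iff] at h
    rw [EReal.coe_le_coe_iff]
    have := ENNReal.toReal_nonneg (a := x)
    rcases max_cases (-w) (0 : ℝ) with ⟨he, _⟩ | ⟨he, _⟩ <;> rw [he] <;> linarith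

/-- Under (L), the price functional is positive. -/
lemma L_to_IPos {𝒮 : Set (ℕ → ℝ)} (hL : LeinertCond 𝒮) : IPos 𝒮 := by
  intro P hP
  have hmem : totalEndow (consP P fun _ => zeroP) ∈
      {c : EReal | ∃ P : ℕ → SimplePortfolio, IsGenPortfolio 𝒮 P ∧
        (∀ S ∈ 𝒮, (0 : EReal) ≤ totalWealth P S) ∧ c = totalEndow P} := by
    refine ⟨_, isGen_consP P (fun _ => zeroP_positive 𝒮), ?_, rfl⟩
    intro S hS
    rw [totalWealth_consP]
    simp only [tsum_zeroP_wealth, EReal.coe_ennreal_zero, add_zero]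
    exact_mod_cast hP S hS
  have h0 : (0 : EReal) ≤ totalEndow (consP P fun _ => zeroP) :=
    le_trans hL (sInf_le hmem)
  rw [totalEndow_consP] at h0
  simp only [tsum_zeroP_V, EReal.coe_ennreal_zero, add_zero] at h0
  exact_mod_cast h0

/-- Under (L), the law of one price holds. -/
lemma L_to_LOP {𝒮 : Set (ℕ → ℝ)} (hL : LeinertCond 𝒮) : LOP 𝒮 := by
  have hI := L_to_IPos hL
  intro P Q h
  have h1 : 0 ≤ (subP P Q).V := hI _ (fun S hS => by
    rw [subP_wealth, h S hS]; simp)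
  have h2 : 0 ≤ (subP Q P).V := hI _ (fun S hS => by
    rw [subP_wealth, h S hS]; simp)
  rw [subP_V] at h1 h2
  linarith

/-- Under (L), the continuity condition holds. -/
lemma L_to_cont {𝒮 : Set (ℕ → ℝ)} (hL : LeinertCond 𝒮) (P : SimplePortfolio) :
    (P.V : EReal) ≤ IBar 𝒮 (fun S => ((max (P.wealth S) 0 : ℝ) : EReal)) := by
  apply le_sInf
  rintro c ⟨Q, hQpos, hQsup, rfl⟩
  have hmem : totalEndow (consP (negP P) Q) ∈
      {c : EReal | ∃ P : ℕ → SimplePortfolio, IsGenPortfolio 𝒮 P ∧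
        (∀ S ∈ 𝒮, (0 : EReal) ≤ totalWealth P S) ∧ c = totalEndow P} := by
    refine ⟨_, isGen_consP _ hQpos, ?_, rfl⟩
    intro S hS
    have hw : ((P.wealth S : ℝ) : EReal) ≤
        ((∑' m, ENNReal.ofReal ((Q m).wealth S) : ℝ≥0∞) : EReal) :=
      le_trans (EReal.coe_le_coe_iff.2 (le_max_left _ _)) (hQsup S hS)
    have h2 := (ereal_helper 0 (P.wealth S) (∑' m, ENNReal.ofReal ((Q m).wealth S))).1
      (by rwa [EReal.coe_zero, zero_add])
    rw [totalWealth_consP, negP_wealth,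
      show (-(P.wealth S) : ℝ) = (0 - P.wealth S : ℝ) by ring]
    exact h2
  have h0 : (0 : EReal) ≤ totalEndow (consP (negP P) Q) := le_trans hL (sInf_le hmem)
  rw [totalEndow_consP, negP_V,
    show (-(P.V) : ℝ) = (0 - P.V : ℝ) by ring] at h0
  have h3 := (ereal_helper 0 P.V (∑' m, ENNReal.ofReal ((Q m).V))).2 h0
  rwa [EReal.coe_zero, zero_add] at h3

/-- Under (L), `σ̄(f) = I(f)` on `E`. -/
lemma L_to_sigma {𝒮 : Set (ℕ → ℝ)} (hL : LeinertCond 𝒮) (P : SimplePortfolio) :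
    sigmaBar 𝒮 (fun S => ((P.wealth S : ℝ) : EReal)) = (P.V : EReal) := by
  apply le_antisymm
  · -- σ̄ ≤ I
    have hmem : totalEndow (consP P fun _ => zeroP) ∈
        {c : EReal | ∃ Q : ℕ → SimplePortfolio, IsGenPortfolio 𝒮 Q ∧
          (∀ S ∈ 𝒮, ((P.wealth S : ℝ) : EReal) ≤ totalWealth Q S) ∧
          c = totalEndow Q} := by
      refine ⟨_, isGen_consP P (fun _ => zeroP_positive 𝒮), ?_, rfl⟩
      intro S _
      rw [totalWealth_consP]
      simp
    have hend : totalEndow (consP P fun _ => zeroP) = (P.V : EReal) := by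
      rw [totalEndow_consP]
      simp
    calc sigmaBar 𝒮 (fun S => ((P.wealth S : ℝ) : EReal))
        ≤ totalEndow (consP P fun _ => zeroP) := sInf_le hmem
      _ = (P.V : EReal) := hend
  · -- I ≤ σ̄
    apply le_sInf
    rintro c ⟨Q, hQgen, hQsup, rfl⟩
    have hmem : totalEndow (consP (subP (Q 0) P) (fun m => Q (m + 1))) ∈
        {c : EReal | ∃ P : ℕ → SimplePortfolio, IsGenPortfolio 𝒮 P ∧
          (∀ S ∈ 𝒮, (0 : EReal) ≤ totalWealth P S) ∧ c = totalEndow P} := by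
      refine ⟨_, isGen_consP _ (fun m => hQgen (m + 1) (Nat.le_add_left 1 m)), ?_, rfl⟩
      intro S hS
      have h := hQsup S hS
      simp only [totalWealth] at h
      have h2 := (ereal_helper ((Q 0).wealth S) (P.wealth S)
        (∑' m, ENNReal.ofReal ((Q (m + 1)).wealth S))).1 h
      rw [totalWealth_consP, subP_wealth]
      exact h2
    have h0 : (0 : EReal) ≤ totalEndow (consP (subP (Q 0) P) (fun m => Q (m + 1))) :=
      le_trans hL (sInf_le hmem)
    rw [totalEndow_consP, subP_V] at h0
    simp only [totalEndow]
    exact (ereal_helper ((Q 0).V) P.V (∑' m, ENNReal.ofReal ((Q (m + 1)).V))).2 h0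

/-- Under (L), `Ī(f) = I(f)` on `E⁺`. -/
lemma L_to_ibar {𝒮 : Set (ℕ → ℝ)} (hL : LeinertCond 𝒮) (P : SimplePortfolio)
    (hpos : ∀ S ∈ 𝒮, 0 ≤ P.wealth S) :
    IBar 𝒮 (fun S => ((P.wealth S : ℝ) : EReal)) = (P.V : EReal) := by
  have hV : 0 ≤ P.V := L_to_IPos hL P hpos
  apply le_antisymm
  · -- Ī ≤ I
    set R : ℕ → SimplePortfolio := consP P fun _ => zeroP with hR
    have hzero : ∀ m : ℕ, m ≠ 0 → R m = zeroP := by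
      intro m hm
      match m, hm with
      | m + 1, _ => rfl
    have hcost : ((∑' m, ENNReal.ofReal ((R m).V) : ℝ≥0∞) : EReal) = (P.V : EReal) := by
      rw [tsum_eq_single 0 (fun m hm => by rw [hzero m hm, zeroP_V, ENNReal.ofReal_zero])]
      rw [show R 0 = P from rfl, EReal.coe_ennreal_ofReal, max_eq_left hV]
    have hmem : ((∑' m, ENNReal.ofReal ((R m).V) : ℝ≥0∞) : EReal) ∈
        {c : EReal | ∃ Q : ℕ → SimplePortfolio, (∀ m, (Q m).Positive 𝒮) ∧
          (∀ S ∈ 𝒮, ((P.wealth S : ℝ) : EReal) ≤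
            ((∑' m, ENNReal.ofReal ((Q m).wealth S) : ℝ≥0∞) : EReal)) ∧
          c = ((∑' m, ENNReal.ofReal ((Q m).V) : ℝ≥0∞) : EReal)} := by
      refine ⟨R, ?_, ?_, rfl⟩
      · intro m
        match m with
        | 0 => exact ⟨hV, hpos⟩
        | m + 1 => exact zeroP_positive 𝒮
      · intro S _
        rw [tsum_eq_single 0 (fun m hm => by
          rw [hzero m hm, zeroP_wealth, ENNReal.ofReal_zero])]
        rw [show R 0 = P from rfl, EReal.coe_ennreal_ofReal]
        exact EReal.coe_le_coe_iff.2 (le_max_left _ _)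
    calc IBar 𝒮 (fun S => ((P.wealth S : ℝ) : EReal))
        ≤ ((∑' m, ENNReal.ofReal ((R m).V) : ℝ≥0∞) : EReal) := sInf_le hmem
      _ = (P.V : EReal) := hcost
  · -- I ≤ Ī
    have key : IBar 𝒮 (fun S => ((P.wealth S : ℝ) : EReal)) =
        IBar 𝒮 (fun S => ((max (P.wealth S) 0 : ℝ) : EReal)) := by
      unfold IBar
      congr 1
      ext c
      constructor <;> rintro ⟨Q, h1, h2, h3⟩
      · exact ⟨Q, h1, fun S hS => by
          simpa [max_eq_left (hpos S hS)] using h2 S hS, h3⟩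
      · exact ⟨Q, h1, fun S hS => by
          simpa [max_eq_left (hpos S hS)] using h2 S hS, h3⟩
    rw [key]
    exact L_to_cont hL P

end Aux

/-- Leinert's condition (L) holds iff (LOP), positivity of `I`,
and the continuity condition `I(f) ≤ Ī(f⁺)` for `f ∈ E` hold; moreover, under
(L), `σ̄(f) = I(f)` on `E` and `Ī(f) = I(f)` on `E⁺`. -/
theorem stmt4 (𝒮 : Set (ℕ → ℝ)) :
    (LeinertCond 𝒮 ↔
      (LOP 𝒮 ∧ IPos 𝒮 ∧
        ∀ P : SimplePortfolio,
          (P.V : EReal) ≤ IBar 𝒮 (fun S => ((max (P.wealth S) 0 : ℝ) : EReal)))) ∧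
    (LeinertCond 𝒮 →
      (∀ P : SimplePortfolio,
          sigmaBar 𝒮 (fun S => ((P.wealth S : ℝ) : EReal)) = (P.V : EReal)) ∧
      (∀ P : SimplePortfolio, (∀ S ∈ 𝒮, 0 ≤ P.wealth S) →
          IBar 𝒮 (fun S => ((P.wealth S : ℝ) : EReal)) = (P.V : EReal))) := by
  constructor
  · constructor
    · intro hL
      exact ⟨L_to_LOP hL, L_to_IPos hL, L_to_cont hL⟩
    · rintro ⟨-, -, hcont⟩
      refine le_sInf ?_
      rintro c ⟨Q, hQgen, hQsup, rfl⟩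
      have hc := hcont (negP (Q 0))
      have hle : (((negP (Q 0)).V : ℝ) : EReal) ≤
          ((∑' m, ENNReal.ofReal ((Q (m + 1)).V) : ℝ≥0∞) : EReal) := by
        refine le_trans hc (sInf_le ?_)
        refine ⟨fun m => Q (m + 1), fun m => hQgen (m + 1) (Nat.le_add_left 1 m), ?_, rfl⟩
        intro S hS
        have h := hQsup S hS
        simp only [totalWealth] at h
        simpa [negP_wealth] using
          ereal_helper2 ((Q 0).wealth S) (∑' m, ENNReal.ofReal ((Q (m + 1)).wealth S)) h
      rw [negP_V] at hle
      simp only [totalEndow]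
      have h4 := (ereal_helper 0 (-(Q 0).V) (∑' m, ENNReal.ofReal ((Q (m + 1)).V))).1
        (by rw [EReal.coe_zero, zero_add]; exact hle)
      rwa [show ((0 : ℝ) - (-(Q 0).V)) = (Q 0).V by ring] at h4
  · intro hL
    exact ⟨L_to_sigma hL, fun P hpos => L_to_ibar hL P hpos⟩
end
end

section
/- The following are equivalent for a trajectory set S: (1) Ī(f) = σ̄(f) for every financial position f: S → [0,∞]; (2) Ī(f) = σ̄(f) for every real-valued nonnegative financial position f of finite maturity; (3) (LOP) holds together with König's continuity condition (K): I(f) + Ī(f⁻) ≤ Ī(f⁺) for every f ∈ E. Moreover, each of these conditions implies Leinert's condition (L): σ̄(0) ≥ 0. -/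
/-!
Only (K) ⇒ (1) needs an argument. Let a generalized portfolio `P` superhedge `f ≥ 0` and cut it
after `k` terms: the head `Q = P 0 + ⋯ + P k` is a simple portfolio and the positive tail has
price `τ_k → 0`. As `f ≥ 0`, the tail dominates the negative part of the wealth of `Q`, so
`Ī(Q⁻) ≤ τ_k`, and (K) applied to `-Q` gives `Ī(Q⁺) ≤ Q.V + τ_k`. Subadditivity of `Ī` then
yields `Ī(f) ≤ Ī(Q⁺) + τ_k ≤ (price of P) + τ_k`.

Conversely, (2) applied to `f⁺` and `f⁻` for `f ∈ E` turns the translation property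
`I(f) + σ̄(f⁻) ≤ σ̄(f⁺)` of `σ̄` into (K), and applied to `0` it gives (L) since `Ī ≥ 0`;
(L) makes `I` positive, which is (LOP).
-/

open Filter
open scoped ENNReal

noncomputable section

open Topology

namespace SimplePortfolio

instance : Zero SimplePortfolio := ⟨⟨0, 0, fun _ _ => 0, fun _ _ _ _ => rfl⟩⟩

instance : Add SimplePortfolio where
  add P Q :=
    { V := P.V + Q.V
      n := max P.n Q.n
      H := fun i S => (if i < P.n then P.H i S else 0) + (if i < Q.n then Q.H i S else 0)
      nonanticipating := fun i S S' h => by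
        rw [P.nonanticipating i S S' h, Q.nonanticipating i S S' h] }

instance : Neg SimplePortfolio where
  neg P :=
    { V := -P.V
      n := P.n
      H := fun i S => -P.H i S
      nonanticipating := fun i S S' h => by rw [P.nonanticipating i S S' h] }

@[simp] lemma V_zero : (0 : SimplePortfolio).V = 0 := rfl

@[simp] lemma V_add (P Q : SimplePortfolio) : (P + Q).V = P.V + Q.V := rfl

@[simp] lemma V_neg (P : SimplePortfolio) : (-P).V = -P.V := rfl

@[simp] lemma wealth_zero (S : ℕ → ℝ) : (0 : SimplePortfolio).wealth S = 0 := by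
  simp [wealth, show (0 : SimplePortfolio).n = 0 from rfl]

lemma sum_range_ite_lt_mul (P : SimplePortfolio) (S : ℕ → ℝ) {N : ℕ} (hN : P.n ≤ N) :
    ∑ i ∈ Finset.range N, (if i < P.n then P.H i S else 0) * (S (i + 1) - S i)
      = ∑ i ∈ Finset.range P.n, P.H i S * (S (i + 1) - S i) := by
  refine (Finset.sum_subset (Finset.range_subset_range.2 hN) fun i _ hi => ?_).symm.trans
    (Finset.sum_congr rfl fun i hi => ?_)
  · rw [if_neg (mt Finset.mem_range.2 hi), zero_mul]
  · rw [if_pos (Finset.mem_range.1 hi)]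

@[simp] lemma wealth_add (P Q : SimplePortfolio) (S : ℕ → ℝ) :
    (P + Q).wealth S = P.wealth S + Q.wealth S := by
  change P.V + Q.V + ∑ i ∈ Finset.range (max P.n Q.n),
      ((if i < P.n then P.H i S else 0) + (if i < Q.n then Q.H i S else 0)) * (S (i + 1) - S i) = _
  rw [Finset.sum_congr rfl fun i _ => add_mul _ _ _, Finset.sum_add_distrib,
    sum_range_ite_lt_mul P S (le_max_left _ _), sum_range_ite_lt_mul Q S (le_max_right _ _)]
  simp only [wealth]
  ring

@[simp] lemma wealth_neg (P : SimplePortfolio) (S : ℕ → ℝ) : (-P).wealth S = -P.wealth S := by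
  change -P.V + ∑ i ∈ Finset.range P.n, -P.H i S * _ = _
  simp only [wealth, neg_mul, Finset.sum_neg_distrib]
  ring

lemma wealth_congr (P : SimplePortfolio) {S S' : ℕ → ℝ} (h : ∀ i, i ≤ P.n → S i = S' i) :
    P.wealth S = P.wealth S' := by
  refine congrArg (P.V + ·) (Finset.sum_congr rfl fun i hi => ?_)
  have hi := Finset.mem_range.1 hi
  rw [P.nonanticipating i S S' fun k hk => h k (hk.trans hi.le), h (i + 1) hi, h i hi.le]

def partialSum (P : ℕ → SimplePortfolio) : ℕ → SimplePortfolio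
  | 0 => 0
  | k + 1 => partialSum P k + P k

@[simp] lemma V_partialSum (P : ℕ → SimplePortfolio) (k : ℕ) :
    (partialSum P k).V = ∑ m ∈ Finset.range k, (P m).V := by
  induction k with
  | zero => rfl
  | succ k ih => simp [partialSum, ih, Finset.sum_range_succ]

@[simp] lemma wealth_partialSum (P : ℕ → SimplePortfolio) (k : ℕ) (S : ℕ → ℝ) :
    (partialSum P k).wealth S = ∑ m ∈ Finset.range k, (P m).wealth S := by
  induction k with
  | zero => simp [partialSum]
  | succ k ih => simp [partialSum, ih, Finset.sum_range_succ]

end SimplePortfolio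

lemma ENNReal.tsum_comp_natSumNatEquivNat_symm (f : ℕ ⊕ ℕ → ℝ≥0∞) :
    ∑' m, f (Equiv.natSumNatEquivNat.symm m) = ∑' m, f (.inl m) + ∑' m, f (.inr m) := by
  rw [Equiv.tsum_eq, ENNReal.summable.tsum_sum ENNReal.summable]

lemma EReal.coe_max_neg_zero_le {a : ℝ} {t : ℝ≥0∞} (h : 0 ≤ (a : EReal) + t) :
    ((max (-a) 0 : ℝ) : EReal) ≤ t := by
  rcases eq_or_ne t ⊤ with rfl | ht
  · simp
  lift t to NNReal using ht
  rw [EReal.coe_nnreal_eq_coe_real, ← EReal.coe_add, EReal.coe_nonneg] at h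
  exact EReal.coe_le_coe_iff.2 (max_le (neg_le_iff_add_nonneg'.2 h) t.2)

lemma EReal.coe_add_tsum_ofReal_eq (a : ℕ → ℝ) (ha : ∀ m, 0 ≤ a (m + 1)) (k : ℕ) :
    (a 0 : EReal) + ↑(∑' m, ENNReal.ofReal (a (m + 1)))
      = ((∑ m ∈ Finset.range (k + 1), a m : ℝ) : EReal)
        + ↑(∑' m, ENNReal.ofReal (a (m + k + 1))) := by
  rw [← ENNReal.summable.sum_add_tsum_nat_add' (k := k), EReal.coe_ennreal_add, ← add_assoc,
    ← ENNReal.ofReal_sum_of_nonneg fun m _ => ha m, EReal.coe_ennreal_ofReal,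
    max_eq_left (Finset.sum_nonneg fun m _ => ha m), ← EReal.coe_add, Finset.sum_range_succ' a,
    add_comm (a 0)]

open SimplePortfolio

def IBarEqSigmaBar (𝒮 : Set (ℕ → ℝ)) : Prop :=
  ∀ f : (ℕ → ℝ) → EReal, (∀ S ∈ 𝒮, 0 ≤ f S) → IBar 𝒮 f = sigmaBar 𝒮 f

def IBarEqSigmaBarOnFiniteMaturity (𝒮 : Set (ℕ → ℝ)) : Prop :=
  ∀ f : (ℕ → ℝ) → ℝ, (∀ S ∈ 𝒮, 0 ≤ f S) → FiniteMaturity 𝒮 f →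
    IBar 𝒮 (fun S => ((f S : ℝ) : EReal)) = sigmaBar 𝒮 (fun S => ((f S : ℝ) : EReal))

section Superhedging

variable {𝒮 : Set (ℕ → ℝ)}

lemma positive_zero : (0 : SimplePortfolio).Positive 𝒮 := ⟨le_rfl, fun S _ => by simp⟩

lemma IBar_nonneg (f : (ℕ → ℝ) → EReal) : 0 ≤ IBar 𝒮 f :=
  le_sInf fun _ ⟨_, _, _, hc⟩ => hc ▸ EReal.coe_ennreal_nonneg _

lemma IBar_le_tsum {f : (ℕ → ℝ) → EReal} {P : ℕ → SimplePortfolio} (hP : ∀ m, (P m).Positive 𝒮)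
    (hf : ∀ S ∈ 𝒮, f S ≤ ↑(∑' m, ENNReal.ofReal ((P m).wealth S))) :
    IBar 𝒮 f ≤ ↑(∑' m, ENNReal.ofReal ((P m).V)) :=
  sInf_le ⟨P, hP, hf, rfl⟩

lemma IBar_mono {f g : (ℕ → ℝ) → EReal} (h : ∀ S ∈ 𝒮, f S ≤ g S) : IBar 𝒮 f ≤ IBar 𝒮 g :=
  sInf_le_sInf fun _ ⟨P, hP, hg, hc⟩ => ⟨P, hP, fun S hS => (h S hS).trans (hg S hS), hc⟩

/-- Interleaving two positive generalized portfolios hedges the sum. -/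
lemma IBar_add_le (f g : (ℕ → ℝ) → EReal) : IBar 𝒮 (f + g) ≤ IBar 𝒮 f + IBar 𝒮 g := by
  have hne : ∀ h, IBar 𝒮 h ≠ ⊥ := fun h => ne_bot_of_le_ne_bot EReal.zero_ne_bot (IBar_nonneg h)
  refine EReal.le_add_of_forall_gt (.inl (hne f)) (.inr (hne g)) fun a ha b hb => ?_
  obtain ⟨_, ⟨A, hA, hfA, rfl⟩, hAa⟩ := sInf_lt_iff.1 ha
  obtain ⟨_, ⟨B, hB, hgB, rfl⟩, hBb⟩ := sInf_lt_iff.1 hb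
  set R : ℕ → SimplePortfolio := fun m => Sum.elim A B (Equiv.natSumNatEquivNat.symm m)
  have hR (u : SimplePortfolio → ℝ≥0∞) :
      ((∑' m, u (R m) : ℝ≥0∞) : EReal) = ↑(∑' m, u (A m)) + ↑(∑' m, u (B m)) := by
    rw [ENNReal.tsum_comp_natSumNatEquivNat_symm (fun x => u (Sum.elim A B x)),
      EReal.coe_ennreal_add]
    rfl
  have hRpos : ∀ m, (R m).Positive 𝒮 := fun m => by
    change (Sum.elim A B (Equiv.natSumNatEquivNat.symm m)).Positive 𝒮
    generalize Equiv.natSumNatEquivNat.symm m = x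
    rcases x with i | i
    · exact hA i
    · exact hB i
  calc IBar 𝒮 (f + g) ≤ ↑(∑' m, ENNReal.ofReal ((R m).V)) :=
        IBar_le_tsum hRpos fun S hS => by
          rw [hR fun Q => ENNReal.ofReal (Q.wealth S)]
          exact add_le_add (hfA S hS) (hgB S hS)
    _ ≤ a + b := by
        rw [hR fun Q => ENNReal.ofReal Q.V]
        exact add_le_add hAa.le hBb.le

lemma sigmaBar_le_IBar (f : (ℕ → ℝ) → EReal) : sigmaBar 𝒮 f ≤ IBar 𝒮 f := by
  refine sInf_le_sInf ?_
  rintro _ ⟨P, hP, hf, rfl⟩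
  refine ⟨P, fun m _ => hP m, fun S hS => (hf S hS).trans_eq ?_, ?_⟩
  · rw [tsum_eq_zero_add' (f := fun m => ENNReal.ofReal ((P m).wealth S)) ENNReal.summable,
      EReal.coe_ennreal_add, EReal.coe_ennreal_ofReal, max_eq_left ((hP 0).2 S hS)]
    rfl
  · rw [tsum_eq_zero_add' (f := fun m => ENNReal.ofReal (P m).V) ENNReal.summable,
      EReal.coe_ennreal_add, EReal.coe_ennreal_ofReal, max_eq_left (hP 0).1]
    rfl

lemma sigmaBar_le_totalEndow {f : (ℕ → ℝ) → EReal} {P : ℕ → SimplePortfolio}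
    (hP : IsGenPortfolio 𝒮 P) (hf : ∀ S ∈ 𝒮, f S ≤ totalWealth P S) :
    sigmaBar 𝒮 f ≤ totalEndow P :=
  sInf_le ⟨P, hP, hf, rfl⟩

lemma sigmaBar_le_V {f : (ℕ → ℝ) → EReal} (P : SimplePortfolio)
    (h : ∀ S ∈ 𝒮, f S ≤ P.wealth S) : sigmaBar 𝒮 f ≤ P.V := by
  set P' : ℕ → SimplePortfolio := fun | 0 => P | _ + 1 => 0
  have hP' : IsGenPortfolio 𝒮 P' := by
    rintro (_ | m) hm
    · omega
    · exact positive_zero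
  simpa [P', totalEndow] using sigmaBar_le_totalEndow hP' fun S hS => by
    simpa [P', totalWealth] using h S hS

end Superhedging

section Conditions

variable {𝒮 : Set (ℕ → ℝ)}

lemma LeinertCond.iPos (h : LeinertCond 𝒮) : IPos 𝒮 := fun P hP =>
  EReal.coe_nonneg.1 (h.trans (sigmaBar_le_V P fun S hS => EReal.coe_nonneg.2 (hP S hS)))

lemma IPos.lop (h : IPos 𝒮) : LOP 𝒮 := fun P Q hPQ => by
  have hQP := h (Q + -P) fun S hS => by simp [hPQ S hS]
  have hPQ := h (P + -Q) fun S hS => by simp [hPQ S hS]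
  simp only [V_add, V_neg] at hQP hPQ
  linarith

/-- Replacing the first portfolio `Q 0` of a superhedge of `f` by `Q 0 - P` gives a
superhedge of `g`. -/
lemma coe_V_add_sigmaBar_le {f g : (ℕ → ℝ) → ℝ} (P : SimplePortfolio)
    (h : ∀ S ∈ 𝒮, g S + P.wealth S ≤ f S) :
    (P.V : EReal) + sigmaBar 𝒮 (fun S => (g S : EReal)) ≤ sigmaBar 𝒮 (fun S => (f S : EReal)) := by
  refine le_sInf ?_
  rintro _ ⟨Q, hQ, hfQ, rfl⟩
  set Q' : ℕ → SimplePortfolio := fun | 0 => Q 0 + -P | m + 1 => Q (m + 1)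
  have hQ' : IsGenPortfolio 𝒮 Q' := by
    rintro (_ | m) hm
    · omega
    · exact hQ _ hm
  have hgQ' : ∀ S ∈ 𝒮, (g S : EReal) ≤ totalWealth Q' S := fun S hS => by
    have hfQS : (f S : EReal) + ((-P.wealth S : ℝ) : EReal) ≤ totalWealth Q S + _ :=
      add_le_add_left (hfQ S hS) _
    calc (g S : EReal) ≤ ((f S + -P.wealth S : ℝ) : EReal) :=
          EReal.coe_le_coe_iff.2 (by linarith [h S hS])
      _ ≤ totalWealth Q S + ((-P.wealth S : ℝ) : EReal) := by rwa [EReal.coe_add]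
      _ = totalWealth Q' S := by
          simp only [totalWealth, Q', wealth_add, wealth_neg, EReal.coe_add, add_right_comm]
  calc (P.V : EReal) + sigmaBar 𝒮 (fun S => (g S : EReal))
      ≤ (P.V : EReal) + totalEndow Q' := add_le_add_right (sigmaBar_le_totalEndow hQ' hgQ') _
    _ = totalEndow Q := by
        have hV : P.V + (Q 0 + -P).V = (Q 0).V := by simp
        rw [totalEndow, totalEndow, ← add_assoc, ← EReal.coe_add]
        exact congrArg (· + _) (congrArg _ hV)

lemma finiteMaturity_comp_wealth (P : SimplePortfolio) (u : ℝ → ℝ) :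
    FiniteMaturity 𝒮 (fun S => u (P.wealth S)) :=
  ⟨P.n, fun _ _ _ _ h => congrArg u (P.wealth_congr h)⟩

lemma IBarEqSigmaBar.onFiniteMaturity (h : IBarEqSigmaBar 𝒮) :
    IBarEqSigmaBarOnFiniteMaturity 𝒮 :=
  fun _ hf _ => h _ fun S hS => EReal.coe_nonneg.2 (hf S hS)

namespace IBarEqSigmaBarOnFiniteMaturity

lemma leinertCond (h : IBarEqSigmaBarOnFiniteMaturity 𝒮) : LeinertCond 𝒮 := by
  have h0 := h (fun _ => 0) (fun _ _ => le_rfl) ⟨0, fun _ _ _ _ _ => rfl⟩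
  simp only [EReal.coe_zero] at h0
  rw [LeinertCond, ← h0]
  exact IBar_nonneg _

lemma lop (h : IBarEqSigmaBarOnFiniteMaturity 𝒮) : LOP 𝒮 :=
  h.leinertCond.iPos.lop

lemma koenigCond (h : IBarEqSigmaBarOnFiniteMaturity 𝒮) : KoenigCond 𝒮 := fun P => by
  rw [h _ (fun _ _ => le_max_right _ _) (finiteMaturity_comp_wealth P fun x => max x 0),
    h _ (fun _ _ => le_max_right _ _) (finiteMaturity_comp_wealth P fun x => max (-x) 0)]
  refine coe_V_add_sigmaBar_le P fun S _ => ?_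
  rcases le_total (P.wealth S) 0 with hw | hw <;> simp [hw]

end IBarEqSigmaBarOnFiniteMaturity

end Conditions

namespace KoenigCond

variable {𝒮 : Set (ℕ → ℝ)}

lemma IBar_posPart_le (hK : KoenigCond 𝒮) (Q : SimplePortfolio) :
    IBar 𝒮 (fun S => ((max (Q.wealth S) 0 : ℝ) : EReal))
      ≤ Q.V + IBar 𝒮 (fun S => ((max (-Q.wealth S) 0 : ℝ) : EReal)) := by
  have h := hK (-Q)
  simp only [wealth_neg, neg_neg, V_neg] at h
  calc _ = (Q.V : EReal) + (((-Q.V : ℝ) : EReal) + _) := by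
        rw [← add_assoc, ← EReal.coe_add, add_neg_cancel, EReal.coe_zero, zero_add]
    _ ≤ _ := add_le_add le_rfl h

lemma IBar_le_totalEndow_add_tail (hK : KoenigCond 𝒮) {f : (ℕ → ℝ) → EReal}
    {P : ℕ → SimplePortfolio} (hP : IsGenPortfolio 𝒮 P) (hf : ∀ S ∈ 𝒮, 0 ≤ f S)
    (hfP : ∀ S ∈ 𝒮, f S ≤ totalWealth P S) (k : ℕ) :
    IBar 𝒮 f ≤ totalEndow P + ↑(∑' m, ENNReal.ofReal (P (m + k + 1)).V) := by
  set Q := partialSum P (k + 1)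
  set T : (ℕ → ℝ) → EReal := fun S => ↑(∑' m, ENNReal.ofReal ((P (m + k + 1)).wealth S))
  set τ : EReal := ↑(∑' m, ENNReal.ofReal (P (m + k + 1)).V)
  have hwealth : ∀ S ∈ 𝒮, totalWealth P S = Q.wealth S + T S := fun S hS => by
    refine (EReal.coe_add_tsum_ofReal_eq (fun m => (P m).wealth S)
      (fun m => (hP (m + 1) (by omega)).2 S hS) k).trans ?_
    rw [wealth_partialSum]
  have hendow : totalEndow P = Q.V + τ := by
    refine (EReal.coe_add_tsum_ofReal_eq (fun m => (P m).V)
      (fun m => (hP (m + 1) (by omega)).1) k).trans ?_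
    rw [V_partialSum]
  have hT : IBar 𝒮 T ≤ τ := IBar_le_tsum (fun m => hP _ (by omega)) fun _ _ => le_rfl
  have hneg : IBar 𝒮 (fun S => ((max (-Q.wealth S) 0 : ℝ) : EReal)) ≤ τ :=
    (IBar_mono fun S hS => EReal.coe_max_neg_zero_le
      ((hf S hS).trans ((hfP S hS).trans_eq (hwealth S hS)))).trans hT
  calc IBar 𝒮 f
      ≤ IBar 𝒮 ((fun S => ((max (Q.wealth S) 0 : ℝ) : EReal)) + T) :=
        IBar_mono fun S hS => (hfP S hS).trans <| (hwealth S hS).trans_le <|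
          add_le_add_left (EReal.coe_le_coe_iff.2 (le_max_left _ _)) _
    _ ≤ IBar 𝒮 (fun S => ((max (Q.wealth S) 0 : ℝ) : EReal)) + IBar 𝒮 T := IBar_add_le _ _
    _ ≤ Q.V + τ + τ := add_le_add ((hK.IBar_posPart_le Q).trans (add_le_add_right hneg _)) hT
    _ = totalEndow P + τ := by rw [hendow]

lemma IBar_le_totalEndow (hK : KoenigCond 𝒮) {f : (ℕ → ℝ) → EReal}
    {P : ℕ → SimplePortfolio} (hP : IsGenPortfolio 𝒮 P) (hf : ∀ S ∈ 𝒮, 0 ≤ f S)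
    (hfP : ∀ S ∈ 𝒮, f S ≤ totalWealth P S) : IBar 𝒮 f ≤ totalEndow P := by
  by_cases hV : ∑' m, ENNReal.ofReal (P (m + 1)).V = ⊤
  · simp [totalEndow, hV]
  have htail : Tendsto (fun k => ((∑' m, ENNReal.ofReal (P (m + k + 1)).V : ℝ≥0∞) : EReal))
      atTop (𝓝 0) := by
    simpa [Function.comp_def] using (continuous_coe_ennreal_ereal.tendsto 0).comp
      (ENNReal.tendsto_sum_nat_add (fun m => ENNReal.ofReal (P (m + 1)).V) hV)
  have hlim : Tendsto (fun k => totalEndow P + ↑(∑' m, ENNReal.ofReal (P (m + k + 1)).V))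
      atTop (𝓝 (totalEndow P)) := by
    simpa [Function.comp_def] using (EReal.continuousAt_add (p := (totalEndow P, 0))
      (.inr EReal.zero_ne_bot) (.inr EReal.zero_ne_top)).tendsto.comp
      (tendsto_const_nhds.prodMk_nhds htail)
  exact ge_of_tendsto' hlim (hK.IBar_le_totalEndow_add_tail hP hf hfP)

lemma iBarEqSigmaBar (hK : KoenigCond 𝒮) : IBarEqSigmaBar 𝒮 := by
  refine fun f hf => (le_sInf ?_).antisymm (sigmaBar_le_IBar f)
  rintro _ ⟨P, hP, hfP, rfl⟩
  exact hK.IBar_le_totalEndow hP hf hfP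

end KoenigCond

/-- equivalence of `Ī = σ̄` on all positive positions, `Ī = σ̄` on
real-valued nonnegative positions of finite maturity, and (LOP) together with
König's condition (K); each implies Leinert's condition (L). -/
theorem stmt7 (𝒮 : Set (ℕ → ℝ)) :
    ((∀ f : (ℕ → ℝ) → EReal, (∀ S ∈ 𝒮, 0 ≤ f S) → IBar 𝒮 f = sigmaBar 𝒮 f) ↔
      (∀ f : (ℕ → ℝ) → ℝ, (∀ S ∈ 𝒮, 0 ≤ f S) → FiniteMaturity 𝒮 f →
        IBar 𝒮 (fun S => ((f S : ℝ) : EReal)) = sigmaBar 𝒮 (fun S => ((f S : ℝ) : EReal)))) ∧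
    ((∀ f : (ℕ → ℝ) → EReal, (∀ S ∈ 𝒮, 0 ≤ f S) → IBar 𝒮 f = sigmaBar 𝒮 f) ↔
      (LOP 𝒮 ∧ KoenigCond 𝒮)) ∧
    ((∀ f : (ℕ → ℝ) → EReal, (∀ S ∈ 𝒮, 0 ≤ f S) → IBar 𝒮 f = sigmaBar 𝒮 f) →
      LeinertCond 𝒮) := by
  change (IBarEqSigmaBar 𝒮 ↔ IBarEqSigmaBarOnFiniteMaturity 𝒮) ∧
    (IBarEqSigmaBar 𝒮 ↔ LOP 𝒮 ∧ KoenigCond 𝒮) ∧ (IBarEqSigmaBar 𝒮 → LeinertCond 𝒮)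
  have h12 : IBarEqSigmaBar 𝒮 → IBarEqSigmaBarOnFiniteMaturity 𝒮 :=
    IBarEqSigmaBar.onFiniteMaturity
  exact ⟨⟨h12, fun h2 => h2.koenigCond.iBarEqSigmaBar⟩,
    ⟨fun h1 => ⟨(h12 h1).lop, (h12 h1).koenigCond⟩, fun h3 => h3.2.iBarEqSigmaBar⟩,
    fun h1 => (h12 h1).leinertCond⟩
end
end

section
/- If the trajectory set S satisfies Leinert's condition at every node (nL), then S has no arbitrage nodes of type II, and the set N of trajectories passing through an arbitrage node of type I at which they actually move (S_{j+1} ≠ S_j while S_{(S,j)} is a type I arbitrage node, for some j) is a ‖·‖-null set. -/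
open Filter
open scoped ENNReal

noncomputable section

open Classical in
/-- The arbitrage sign at a node, determined nonanticipatively. -/
noncomputable def epsOf (𝒮 : Set (ℕ → ℝ)) (T : ℕ → ℝ) (j : ℕ) : ℝ :=
  if (∀ S' ∈ 𝒮, agreesUpTo T S' j → 0 ≤ S' (j + 1) - T j) then 1 else -1

lemma epsOf_cases (𝒮 : Set (ℕ → ℝ)) (T : ℕ → ℝ) (j : ℕ) :
    epsOf 𝒮 T j = 1 ∨ epsOf 𝒮 T j = -1 := by
  unfold epsOf; split <;> simp

lemma epsOf_spec {𝒮 : Set (ℕ → ℝ)} {T : ℕ → ℝ} {j : ℕ} (h : ArbNode 𝒮 T j) :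
    ∀ S' ∈ 𝒮, agreesUpTo T S' j → 0 ≤ epsOf 𝒮 T j * (S' (j + 1) - T j) := by
  intro S' hS' hag
  unfold epsOf
  by_cases hc : ∀ S'' ∈ 𝒮, agreesUpTo T S'' j → 0 ≤ S'' (j + 1) - T j
  · rw [if_pos hc]; simpa using hc S' hS' hag
  · rw [if_neg hc]
    obtain ⟨ε, hε, hnn, S₀, hS₀, hag₀, hpos⟩ := h
    rcases hε with rfl | rfl
    · exact absurd (fun S'' h1 h2 => by simpa using hnn S'' h1 h2) hc
    · simpa using hnn S' hS' hag

lemma agreesUpTo_congr {T T' S' : ℕ → ℝ} {j : ℕ} (h : ∀ k, k ≤ j → T k = T' k) :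
    agreesUpTo T S' j ↔ agreesUpTo T' S' j := by
  constructor <;> intro ha k hk
  · rw [ha k hk]; exact h k hk
  · rw [ha k hk]; exact (h k hk).symm

lemma arbNode_congr {𝒮 : Set (ℕ → ℝ)} {T T' : ℕ → ℝ} {j : ℕ}
    (h : ∀ k, k ≤ j → T k = T' k) (ha : ArbNode 𝒮 T j) : ArbNode 𝒮 T' j := by
  obtain ⟨ε, hε, hnn, S₀, hS₀, hag₀, hpos⟩ := ha
  have hj := h j le_rfl
  exact ⟨ε, hε, fun S' hS' hag => hj ▸ hnn S' hS' ((agreesUpTo_congr h).mpr hag),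
    S₀, hS₀, (agreesUpTo_congr h).mp hag₀, hj ▸ hpos⟩

lemma typeINode_congr {𝒮 : Set (ℕ → ℝ)} {T T' : ℕ → ℝ} {j : ℕ}
    (h : ∀ k, k ≤ j → T k = T' k) (ht : TypeINode 𝒮 T j) : TypeINode 𝒮 T' j := by
  obtain ⟨ha, S₀, hS₀, hag₀, heq⟩ := ht
  exact ⟨arbNode_congr h ha, S₀, hS₀, (agreesUpTo_congr h).mp hag₀, h j le_rfl ▸ heq⟩

lemma epsOf_congr {𝒮 : Set (ℕ → ℝ)} {T T' : ℕ → ℝ} {j : ℕ}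
    (h : ∀ k, k ≤ j → T k = T' k) : epsOf 𝒮 T j = epsOf 𝒮 T' j := by
  unfold epsOf
  have hiff : (∀ S' ∈ 𝒮, agreesUpTo T S' j → 0 ≤ S' (j + 1) - T j) ↔
      (∀ S' ∈ 𝒮, agreesUpTo T' S' j → 0 ≤ S' (j + 1) - T' j) := by
    constructor <;> intro H S' hS' hag
    · rw [← h j le_rfl]; exact H S' hS' ((agreesUpTo_congr h).mpr hag)
    · rw [h j le_rfl]; exact H S' hS' ((agreesUpTo_congr h).mp hag)
  by_cases hc : (∀ S' ∈ 𝒮, agreesUpTo T S' j → 0 ≤ S' (j + 1) - T j)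
  · rw [if_pos hc, if_pos (hiff.mp hc)]
  · rw [if_neg hc, if_neg fun h2 => hc (hiff.mpr h2)]

open Classical in
/-- The portfolios used to show `N` is null: invest `m·ε` at every type I arbitrage node. -/
noncomputable def myP (𝒮 : Set (ℕ → ℝ)) (m : ℕ) : SimplePortfolio where
  V := 0
  n := m
  H := fun i T => if TypeINode 𝒮 T i then (m : ℝ) * epsOf 𝒮 T i else 0
  nonanticipating := by
    intro i T T' h
    beta_reduce
    have h' : ∀ k, k ≤ i → T k = T' k := fun k hk => h k hk
    by_cases ht : TypeINode 𝒮 T i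
    · rw [if_pos ht, if_pos (typeINode_congr h' ht), epsOf_congr h']
    · rw [if_neg ht, if_neg fun ht' => ht (typeINode_congr (fun k hk => (h' k hk).symm) ht')]

open Classical in
lemma myP_term_at (𝒮 : Set (ℕ → ℝ)) (m j : ℕ) (S : ℕ → ℝ) (ht : TypeINode 𝒮 S j) :
    (myP 𝒮 m).H j S * (S (j + 1) - S j) = (m : ℝ) * (epsOf 𝒮 S j * (S (j + 1) - S j)) := by
  show (if TypeINode 𝒮 S j then (m : ℝ) * epsOf 𝒮 S j else 0) * (S (j + 1) - S j)
    = (m : ℝ) * (epsOf 𝒮 S j * (S (j + 1) - S j))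
  rw [if_pos ht, mul_assoc]

open Classical in
lemma myP_term_nonneg (𝒮 : Set (ℕ → ℝ)) (m i : ℕ) {S : ℕ → ℝ} (hS : S ∈ 𝒮) :
    0 ≤ (myP 𝒮 m).H i S * (S (i + 1) - S i) := by
  show 0 ≤ (if TypeINode 𝒮 S i then (m : ℝ) * epsOf 𝒮 S i else 0) * (S (i + 1) - S i)
  by_cases ht : TypeINode 𝒮 S i
  · rw [if_pos ht, mul_assoc]
    exact mul_nonneg (Nat.cast_nonneg m) (epsOf_spec ht.1 S hS fun k _ => rfl)
  · rw [if_neg ht, zero_mul]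

lemma myP_wealth_nonneg (𝒮 : Set (ℕ → ℝ)) (m : ℕ) {S : ℕ → ℝ} (hS : S ∈ 𝒮) :
    0 ≤ (myP 𝒮 m).wealth S := by
  unfold SimplePortfolio.wealth
  have hV : (myP 𝒮 m).V = 0 := rfl
  rw [hV, zero_add]
  exact Finset.sum_nonneg fun i _ => myP_term_nonneg 𝒮 m i hS


/-- (nL) implies that `𝒮` has no type II arbitrage nodes and that
the set `N` of trajectories moving at a type I arbitrage node is a `‖·‖`-null set. -/
theorem stmt12 (𝒮 : Set (ℕ → ℝ)) (hnL : NodewiseL 𝒮) :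
    (∀ S ∈ 𝒮, ∀ j : ℕ, ¬ TypeIINode 𝒮 S j) ∧ NullSet 𝒮 (NSet 𝒮) := by
  constructor
  · -- no type II arbitrage nodes
    intro S hS j hT2
    obtain ⟨⟨ε, hε, hnn, S₀, hS₀, hag₀, hpos₀⟩, hnf⟩ := hT2
    set P : ℕ → SimplePortfolio := fun m =>
      if m = 0 then ⟨-1, 0, fun _ _ => 0, fun _ _ _ _ => rfl⟩
      else ⟨0, 1, fun _ _ => ε, fun _ _ _ _ => rfl⟩ with hP
    have hP0 : P 0 = ⟨-1, 0, fun _ _ => 0, fun _ _ _ _ => rfl⟩ := by simp [hP]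
    have hPm : ∀ m, P (m + 1) = ⟨0, 1, fun _ _ => ε, fun _ _ _ _ => rfl⟩ := by
      intro m; simp [hP]
    have hW0 : ∀ T, (P 0).wealth T = -1 := by
      intro T; rw [hP0]; simp [SimplePortfolio.wealth]
    have hWm : ∀ m T, (P (m + 1)).wealth T = ε * (T 1 - T 0) := by
      intro m T; rw [hPm]; simp [SimplePortfolio.wealth, Finset.sum_range_one]
    have key : ∀ T ∈ shiftedSpace 𝒮 S j, 0 < ε * (T 1 - T 0) := by
      rintro T ⟨S', hS', hag, hT⟩
      have h0 : T 0 = S j := by rw [hT 0]; exact hag j le_rfl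
      have h1 : T 1 = S' (j + 1) := hT 1
      have hnn' := hnn S' hS' hag
      have hne : S' (j + 1) - S j ≠ 0 := by
        intro h
        exact hnf ⟨S', hS', hag, by linarith [sub_eq_zero.mp h]⟩
      rw [h0, h1]
      rcases lt_or_eq_of_le hnn' with h | h
      · exact h
      · exfalso
        rcases mul_eq_zero.mp h.symm with h2 | h2
        · rcases hε with rfl | rfl <;> norm_num at h2
        · exact hne h2
    have hgen : IsGenPortfolio (shiftedSpace 𝒮 S j) P := by
      intro m hm
      obtain ⟨k, rfl⟩ := Nat.exists_eq_succ_of_ne_zero (Nat.one_le_iff_ne_zero.mp hm)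
      constructor
      · rw [hPm]
      · intro T hT; rw [hWm]; exact (key T hT).le
    have hsh : ∀ T ∈ shiftedSpace 𝒮 S j, (fun _ : ℕ → ℝ => (0 : EReal)) T ≤ totalWealth P T := by
      intro T hT
      have htsum : (∑' m, ENNReal.ofReal ((P (m + 1)).wealth T)) = ⊤ := by
        have hw : ∀ m : ℕ, ENNReal.ofReal ((P (m + 1)).wealth T)
            = ENNReal.ofReal (ε * (T 1 - T 0)) := fun m => by rw [hWm]
        rw [tsum_congr hw]
        exact ENNReal.tsum_const_eq_top_of_ne_zero (ENNReal.ofReal_pos.mpr (key T hT)).ne'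
      unfold totalWealth
      rw [htsum, EReal.coe_ennreal_top, EReal.add_top_of_ne_bot (EReal.coe_ne_bot _)]
      exact le_top
    have hle : sigmaBar (shiftedSpace 𝒮 S j) (fun _ => 0) ≤ totalEndow P :=
      sInf_le ⟨P, hgen, hsh, rfl⟩
    have hEnd : totalEndow P = ((-1 : ℝ) : EReal) := by
      unfold totalEndow
      have h0 : (P 0).V = -1 := by rw [hP0]
      have hm : ∀ m, ENNReal.ofReal ((P (m + 1)).V) = 0 := by
        intro m; rw [hPm]; simp
      rw [h0, tsum_congr hm, tsum_zero, EReal.coe_ennreal_zero, add_zero]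
    rw [hEnd] at hle
    have h0 : (0 : EReal) ≤ ((-1 : ℝ) : EReal) := le_trans (hnL S hS j) hle
    rw [EReal.coe_nonneg] at h0
    linarith
  · -- N is a null set
    unfold NullSet
    have hpos : ∀ m, (myP 𝒮 m).Positive 𝒮 := fun m =>
      ⟨le_refl 0, fun S hS => myP_wealth_nonneg 𝒮 m hS⟩
    have hle : ∀ S ∈ 𝒮, (NSet 𝒮).indicator (fun _ => (1 : EReal)) S ≤
        ((∑' m, ENNReal.ofReal ((myP 𝒮 m).wealth S) : ℝ≥0∞) : EReal) := by
      intro S hS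
      by_cases hN : S ∈ NSet 𝒮
      · rw [Set.indicator_of_mem hN]
        obtain ⟨-, j, hTI, hne⟩ := hN
        set a := epsOf 𝒮 S j * (S (j + 1) - S j) with ha
        have ha0 : 0 < a := by
          rcases lt_or_eq_of_le (epsOf_spec hTI.1 S hS fun k _ => rfl) with h | h
          · exact h
          · exfalso
            rcases mul_eq_zero.mp h.symm with h2 | h2
            · rcases epsOf_cases 𝒮 S j with he | he <;> rw [he] at h2 <;> norm_num at h2
            · exact hne (sub_eq_zero.mp h2)
        set m := j + 1 + Nat.ceil a⁻¹ with hm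
        have hjm : j < m := by omega
        have hma : (1 : ℝ) ≤ (m : ℝ) * a := by
          have h1 : a⁻¹ ≤ (m : ℝ) := by
            calc a⁻¹ ≤ (Nat.ceil a⁻¹ : ℝ) := Nat.le_ceil _
            _ ≤ (m : ℝ) := by exact_mod_cast Nat.le_add_left _ _
          calc (1 : ℝ) = a⁻¹ * a := (inv_mul_cancel₀ ha0.ne').symm
          _ ≤ (m : ℝ) * a := mul_le_mul_of_nonneg_right h1 ha0.le
        have hw : (1 : ℝ) ≤ (myP 𝒮 m).wealth S := by
          have hterm := myP_term_at 𝒮 m j S hTI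
          rw [← ha] at hterm
          have hsum : (m : ℝ) * a ≤
              ∑ i ∈ Finset.range (myP 𝒮 m).n, (myP 𝒮 m).H i S * (S (i + 1) - S i) := by
            rw [← hterm]
            exact Finset.single_le_sum (fun i _ => myP_term_nonneg 𝒮 m i hS)
              (Finset.mem_range.mpr hjm)
          unfold SimplePortfolio.wealth
          have hV : (myP 𝒮 m).V = 0 := rfl
          rw [hV, zero_add]
          linarith
        have h1 : (1 : ℝ≥0∞) ≤ ENNReal.ofReal ((myP 𝒮 m).wealth S) := by
          rw [← ENNReal.ofReal_one]; exact ENNReal.ofReal_le_ofReal hw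
        have h2 : (1 : ℝ≥0∞) ≤ ∑' k, ENNReal.ofReal ((myP 𝒮 k).wealth S) :=
          le_trans h1 (ENNReal.le_tsum m)
        calc (1 : EReal) = ((1 : ℝ≥0∞) : EReal) := EReal.coe_ennreal_one.symm
        _ ≤ _ := EReal.coe_ennreal_le_coe_ennreal_iff.mpr h2
      · rw [Set.indicator_of_notMem hN]
        exact EReal.coe_ennreal_nonneg _
    apply le_antisymm
    · have hmem : ((∑' m, ENNReal.ofReal ((myP 𝒮 m).V) : ℝ≥0∞) : EReal) ∈
          {c : EReal | ∃ P : ℕ → SimplePortfolio, (∀ m, (P m).Positive 𝒮) ∧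
            (∀ S ∈ 𝒮, (NSet 𝒮).indicator (fun _ => (1 : EReal)) S ≤
              ((∑' m, ENNReal.ofReal ((P m).wealth S) : ℝ≥0∞) : EReal)) ∧
            c = ((∑' m, ENNReal.ofReal ((P m).V) : ℝ≥0∞) : EReal)} :=
        ⟨myP 𝒮, hpos, hle, rfl⟩
      have h := sInf_le hmem
      have hV : ∀ m, ENNReal.ofReal ((myP 𝒮 m).V) = 0 := by
        intro m; show ENNReal.ofReal 0 = 0; simp
      rw [tsum_congr hV, tsum_zero, EReal.coe_ennreal_zero] at h
      exact h
    · apply le_sInf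
      rintro c ⟨P, -, -, rfl⟩
      exact EReal.coe_ennreal_nonneg _
end
end

section
/- Fix n₀ ∈ ℕ and suppose S has no arbitrage nodes of type II up to time n₀ - 1 (i.e., S_{(S,j)} is not type II for any S and j ≤ n₀-1). Then for every positive simple portfolio (V, n, H) with maturity n ≤ n₀, the entire wealth process is nonnegative: Π^{V,n,H}_j(S) ≥ 0 for all j ∈ ℕ₀ and S ∈ S. -/
open Filter
open scoped ENNReal

noncomputable section

/-- absence of type II arbitrage nodes up to time `n₀ - 1` implies
that the entire wealth process of any positive simple portfolio with maturity
`n ≤ n₀` is nonnegative. -/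
theorem stmt13 (𝒮 : Set (ℕ → ℝ)) (n₀ : ℕ)
    (hno2 : ∀ S ∈ 𝒮, ∀ j < n₀, ¬ TypeIINode 𝒮 S j)
    (P : SimplePortfolio) (hpos : P.Positive 𝒮) (hn : P.n ≤ n₀) :
    ∀ j : ℕ, ∀ S ∈ 𝒮, 0 ≤ P.wealthAt j S := by
  obtain ⟨hV, hterm⟩ := hpos
  have hstep : ∀ j < P.n, ∀ S' S : ℕ → ℝ, agreesUpTo S S' j →
      P.wealthAt (j+1) S' = P.wealthAt j S + P.H j S * (S' (j+1) - S j) := by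
    intro j hj S' S hagree
    have h1 : min (j+1) P.n = j+1 := min_eq_left hj
    have h2 : min j P.n = j := min_eq_left hj.le
    have hH : ∀ i ≤ j, P.H i S' = P.H i S := fun i hi =>
      P.nonanticipating i S' S (fun k hk => hagree k (hk.trans hi))
    simp only [SimplePortfolio.wealthAt, h1, h2, Finset.sum_range_succ]
    have hsum : ∀ i ∈ Finset.range j,
        P.H i S' * (S' (i+1) - S' i) = P.H i S * (S (i+1) - S i) := by
      intro i hi
      have hi' : i < j := Finset.mem_range.mp hi
      rw [hH i hi'.le, hagree (i+1) hi', hagree i hi'.le]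
    rw [Finset.sum_congr rfl hsum, hH j le_rfl, hagree j le_rfl, add_assoc]
  have hge : ∀ j, P.n ≤ j → ∀ S ∈ 𝒮, 0 ≤ P.wealthAt j S := by
    intro j hj S hS
    have heq : P.wealthAt j S = P.wealth S := by
      simp [SimplePortfolio.wealthAt, SimplePortfolio.wealth, min_eq_right hj]
    rw [heq]; exact hterm S hS
  have main : ∀ d j, n₀ ≤ j + d → ∀ S ∈ 𝒮, 0 ≤ P.wealthAt j S := by
    intro d
    induction d with
    | zero => intro j hj S hS; exact hge j (hn.trans (by simpa using hj)) S hS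
    | succ d ih =>
      intro j hj S hS
      by_cases hjn : P.n ≤ j
      · exact hge j hjn S hS
      push_neg at hjn
      have hjn₀ : j < n₀ := lt_of_lt_of_le hjn hn
      have IH : ∀ S' ∈ 𝒮, 0 ≤ P.wealthAt (j+1) S' := fun S' hS' =>
        ih (j+1) (by omega) S' hS'
      have key : ∃ S' ∈ 𝒮, agreesUpTo S S' j ∧ P.H j S * (S' (j+1) - S j) ≤ 0 := by
        by_cases hflat : ∃ S' ∈ 𝒮, agreesUpTo S S' j ∧ S' (j+1) = S j
        · obtain ⟨S', hS', ha, he⟩ := hflat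
          exact ⟨S', hS', ha, by rw [he]; simp⟩
        · have hnarb : ¬ ArbNode 𝒮 S j := fun h => hno2 S hS j hjn₀ ⟨h, hflat⟩
          have hself : agreesUpTo S S j := fun i _ => rfl
          have hΔ : S (j+1) ≠ S j := fun h => hflat ⟨S, hS, hself, h⟩
          rcases lt_or_gt_of_ne hΔ with hlt | hgt
          · have hex : ∃ S'' ∈ 𝒮, agreesUpTo S S'' j ∧
                ¬ (0 ≤ (-1:ℝ) * (S'' (j+1) - S j)) := by
              by_contra hc
              push_neg at hc
              exact hnarb ⟨-1, Or.inr rfl, hc, S, hS, hself, by nlinarith⟩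
            obtain ⟨S'', hS'', ha'', hne⟩ := hex
            push_neg at hne
            rcases le_or_gt (P.H j S) 0 with hH0 | hH0
            · exact ⟨S'', hS'', ha'', by nlinarith⟩
            · exact ⟨S, hS, hself, by nlinarith⟩
          · have hex : ∃ S'' ∈ 𝒮, agreesUpTo S S'' j ∧
                ¬ (0 ≤ (1:ℝ) * (S'' (j+1) - S j)) := by
              by_contra hc
              push_neg at hc
              exact hnarb ⟨1, Or.inl rfl, hc, S, hS, hself, by nlinarith⟩
            obtain ⟨S'', hS'', ha'', hne⟩ := hex
            push_neg at hne
            rcases le_or_gt (P.H j S) 0 with hH0 | hH0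
            · exact ⟨S, hS, hself, by nlinarith⟩
            · exact ⟨S'', hS'', ha'', by nlinarith⟩
      obtain ⟨S', hS', ha, hprod⟩ := key
      have hw := IH S' hS'
      rw [hstep j hjn S' S ha] at hw
      linarith
  intro j S hS
  exact main n₀ j (by omega) S hS
end
end

section
/- If the trajectory set S satisfies Leinert's condition at every node (nL), then each shifted conditional space S^{(S₀,j₀)} also satisfies Leinert's condition at every node. -/
open Filter
open scoped ENNReal

noncomputable section

/-- if (nL) holds for `𝒮`, then (nL) holds for every shifted
conditional space `𝒮^{(S₀,j₀)}`. -/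
theorem stmt14 (𝒮 : Set (ℕ → ℝ)) (hnL : NodewiseL 𝒮)
    (S₀ : ℕ → ℝ) (hS₀ : S₀ ∈ 𝒮) (j₀ : ℕ) :
    NodewiseL (shiftedSpace 𝒮 S₀ j₀) := by
  intro T hT j
  obtain ⟨S', hS', hagree, hTdef⟩ := hT
  have key : shiftedSpace (shiftedSpace 𝒮 S₀ j₀) T j = shiftedSpace 𝒮 S' (j₀ + j) := by
    ext U
    constructor
    · rintro ⟨T', ⟨S'', hS'', hag'', hT'def⟩, hTag, hUdef⟩
      refine ⟨S'', hS'', ?_, ?_⟩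
      · intro i hi
        rcases le_or_gt i j₀ with h | h
        · rw [hag'' i h, hagree i h]
        · have h1 : i - j₀ ≤ j := by omega
          have h2 : j₀ + (i - j₀) = i := by omega
          have := hTag (i - j₀) h1
          rw [hT'def, hTdef, h2] at this
          exact this
      · intro i
        have : j₀ + j + i = j₀ + (j + i) := by ring
        rw [hUdef, hT'def, this]
    · rintro ⟨S'', hS'', hag'', hUdef⟩
      refine ⟨fun i => S'' (j₀ + i), ⟨S'', hS'', ?_, fun i => rfl⟩, ?_, ?_⟩
      · intro i hi
        rw [hag'' i (le_trans hi (Nat.le_add_right _ _)), hagree i hi]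
      · intro i hi
        simp only [hTdef]
        exact hag'' (j₀ + i) (by omega)
      · intro i
        have : j₀ + j + i = j₀ + (j + i) := by ring
        rw [hUdef, this]
  rw [key]
  exact hnL S' hS' (j₀ + j)
end
end

section
/- Fix n ∈ ℕ, let N_n be the set of trajectories hitting a moving type-I arbitrage node before time n, and define τ(S) as the first time j ∈ {1,…,n} with S_{(S,j-1)} a type I arbitrage node and S_j ≠ S_{j-1} (τ(S) = n+1 if no such j). Then for every S ∈ S and i ≤ n: if τ(S) > i, there exists S̃ ∈ S \ N_n with (S_0,…,S_i) = (S̃_0,…,S̃_i). Moreover, in the reduced set S̃ := S \ N_n, for i ≤ n-1 and S ∈ S̃, the node S̃_{(S,i)} is an up-down node if S_{(S,i)} is up-down in S, and is flat if S_{(S,i)} is flat or a type I arbitrage node in S. -/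
open Filter
open scoped ENNReal

noncomputable section

/-- The stopping time `τ`: the first time `j ∈ {1,…,n}` at which `𝒮_{(S,j-1)}` is a
type I arbitrage node and the trajectory moves, and `n + 1` otherwise. -/
def tauN (𝒮 : Set (ℕ → ℝ)) (n : ℕ) (S : ℕ → ℝ) : ℕ :=
  sInf ({j | 1 ≤ j ∧ j ≤ n ∧ TypeINode 𝒮 S (j - 1) ∧ S j ≠ S (j - 1)} ∪ {n + 1})

section Stmt16Aux

lemma agrees_congr' {S T : ℕ → ℝ} {j : ℕ} (h : ∀ k, k ≤ j → S k = T k) (S' : ℕ → ℝ) :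
    agreesUpTo S S' j ↔ agreesUpTo T S' j := by
  constructor <;> intro ha i hi
  · rw [← h i hi]; exact ha i hi
  · rw [h i hi]; exact ha i hi

lemma typeI_congr' (𝒮 : Set (ℕ → ℝ)) {S T : ℕ → ℝ} {j : ℕ}
    (h : ∀ k, k ≤ j → S k = T k) : TypeINode 𝒮 S j → TypeINode 𝒮 T j := by
  rintro ⟨⟨ε, hε, h1, S', hS', ha, h2⟩, S'', hS'', ha2, h3⟩
  have hSj : S j = T j := h j le_rfl
  refine ⟨⟨ε, hε, ?_, S', hS', (agrees_congr' h S').mp ha, by rw [← hSj]; exact h2⟩,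
    S'', hS'', (agrees_congr' h S'').mp ha2, by rw [← hSj]; exact h3⟩
  intro U hU haU
  rw [← hSj]; exact h1 U hU ((agrees_congr' h U).mpr haU)

lemma tau_le' (𝒮 : Set (ℕ → ℝ)) (n : ℕ) (S : ℕ → ℝ) {k : ℕ} (hk : k < n)
    (h1 : TypeINode 𝒮 S k) (h2 : S (k + 1) ≠ S k) : tauN 𝒮 n S ≤ k + 1 :=
  Nat.sInf_le (Or.inl ⟨by omega, by omega, by simpa using h1, by simpa using h2⟩)

lemma lt_tau' (𝒮 : Set (ℕ → ℝ)) (n : ℕ) (S : ℕ → ℝ) {m : ℕ} (hm : m ≤ n)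
    (h : ∀ k, k < n → TypeINode 𝒮 S k → S (k + 1) ≠ S k → m < k + 1) :
    m < tauN 𝒮 n S := by
  have hmem : tauN 𝒮 n S ∈
      ({j | 1 ≤ j ∧ j ≤ n ∧ TypeINode 𝒮 S (j - 1) ∧ S j ≠ S (j - 1)} ∪ {n + 1}) :=
    Nat.sInf_mem ⟨n + 1, Or.inr rfl⟩
  rcases hmem with ⟨h1, h2, h3, h4⟩ | hB
  · obtain ⟨k, hk⟩ := Nat.exists_eq_succ_of_ne_zero (show tauN 𝒮 n S ≠ 0 by omega)
    rw [hk] at h2 h3 h4 ⊢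
    exact h k (by omega) h3 h4
  · simp only [Set.mem_singleton_iff] at hB
    omega

lemma notN_of_tau' (𝒮 : Set (ℕ → ℝ)) (n : ℕ) (T : ℕ → ℝ) (h : n < tauN 𝒮 n T) :
    T ∉ NSetUpTo 𝒮 n := by
  rintro ⟨_, j, hj, hTI, hne⟩
  have := tau_le' 𝒮 n T hj hTI hne
  omega

/-- Key construction: any trajectory with `τ(S) > i` agrees up to `i` with a
trajectory whose `τ` exceeds `n`. -/
lemma key16 (𝒮 : Set (ℕ → ℝ)) (n : ℕ) :
    ∀ d i, i + d = n → ∀ S ∈ 𝒮, i < tauN 𝒮 n S →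
      ∃ T ∈ 𝒮, (∀ k, k ≤ i → S k = T k) ∧ n < tauN 𝒮 n T := by
  intro d
  induction d with
  | zero =>
    intro i hi S hS htau
    exact ⟨S, hS, fun k _ => rfl, by omega⟩
  | succ d ih =>
    intro i hi S hS htau
    by_cases hTI : TypeINode 𝒮 S i
    · obtain ⟨harb, S', hS', ha, hflat⟩ := hTI
      have htau' : i + 1 < tauN 𝒮 n S' := by
        apply lt_tau' 𝒮 n S' (by omega)
        intro k hk h1 h2
        by_contra hlt
        push_neg at hlt
        have hk' : k ≤ i := by omega
        rcases eq_or_lt_of_le hk' with rfl | hki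
        · exact h2 (by rw [hflat, ha k le_rfl])
        · have hTIS : TypeINode 𝒮 S k :=
            typeI_congr' 𝒮 (fun m hm => ha m (by omega)) h1
          have e1 : S' (k + 1) = S (k + 1) := ha _ (by omega)
          have e2 : S' k = S k := ha _ (by omega)
          have h2' : S (k + 1) ≠ S k := by rw [← e1, ← e2]; exact h2
          have := tau_le' 𝒮 n S (by omega) hTIS h2'
          omega
      obtain ⟨T, hT, hag, htT⟩ := ih (i + 1) (by omega) S' hS' htau'
      exact ⟨T, hT, fun k hk => by rw [← ha k hk]; exact hag k (by omega), htT⟩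
    · have htau' : i + 1 < tauN 𝒮 n S := by
        apply lt_tau' 𝒮 n S (by omega)
        intro k hk h1 h2
        by_contra hlt
        push_neg at hlt
        have hk' : k ≤ i := by omega
        rcases eq_or_lt_of_le hk' with rfl | hki
        · exact hTI h1
        · have := tau_le' 𝒮 n S (by omega) h1 h2
          omega
      obtain ⟨T, hT, hag, htT⟩ := ih (i + 1) (by omega) S hS htau'
      exact ⟨T, hT, fun k hk => hag k (by omega), htT⟩

/-- Transfer a trajectory branching out of a non-arbitrage node of a
non-moving trajectory into the reduced set. -/
lemma transfer16 (𝒮 : Set (ℕ → ℝ)) (n : ℕ) {i : ℕ} (hi : i < n) {S : ℕ → ℝ}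
    (hS : S ∈ 𝒮) (hSN : S ∉ NSetUpTo 𝒮 n) (hnA : ¬ TypeINode 𝒮 S i)
    {S₁ : ℕ → ℝ} (hS₁ : S₁ ∈ 𝒮) (ha₁ : agreesUpTo S S₁ i) :
    ∃ T ∈ 𝒮, T ∉ NSetUpTo 𝒮 n ∧ ∀ k, k ≤ i + 1 → S₁ k = T k := by
  have htau : i + 1 < tauN 𝒮 n S₁ := by
    apply lt_tau' 𝒮 n S₁ (by omega)
    intro k hk h1 h2
    by_contra hlt
    push_neg at hlt
    have hk' : k ≤ i := by omega
    rcases eq_or_lt_of_le hk' with rfl | hki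
    · exact hnA (typeI_congr' 𝒮 (fun m hm => ha₁ m hm) h1)
    · have hTIS : TypeINode 𝒮 S k :=
        typeI_congr' 𝒮 (fun m hm => ha₁ m (by omega)) h1
      have e1 : S₁ (k + 1) = S (k + 1) := ha₁ _ (by omega)
      have e2 : S₁ k = S k := ha₁ _ (by omega)
      have h2' : S (k + 1) ≠ S k := by rw [← e1, ← e2]; exact h2
      exact hSN ⟨hS, k, by omega, hTIS, h2'⟩
  obtain ⟨T, hT, hag, htT⟩ := key16 𝒮 n (n - (i + 1)) (i + 1) (by omega) S₁ hS₁ htau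
  exact ⟨T, hT, notN_of_tau' 𝒮 n T htT, hag⟩

lemma updown_moves16 (𝒮 : Set (ℕ → ℝ)) {S : ℕ → ℝ} {i : ℕ} (h : UpDownNode 𝒮 S i) :
    (∃ S₁ ∈ 𝒮, agreesUpTo S S₁ i ∧ S i < S₁ (i + 1)) ∧
    (∃ S₂ ∈ 𝒮, agreesUpTo S S₂ i ∧ S₂ (i + 1) < S i) := by
  obtain ⟨hnf, hna⟩ := h
  unfold FlatNode at hnf
  push_neg at hnf
  obtain ⟨S₀, hS₀, ha₀, hne₀⟩ := hnf
  constructor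
  · by_contra hno
    push_neg at hno
    exact hna ⟨-1, Or.inr rfl,
      fun S' hS' ha => by nlinarith [hno S' hS' ha],
      S₀, hS₀, ha₀, by nlinarith [lt_of_le_of_ne (hno S₀ hS₀ ha₀) hne₀]⟩
  · by_contra hno
    push_neg at hno
    exact hna ⟨1, Or.inl rfl,
      fun S' hS' ha => by nlinarith [hno S' hS' ha],
      S₀, hS₀, ha₀, by nlinarith [lt_of_le_of_ne (hno S₀ hS₀ ha₀) (Ne.symm hne₀)]⟩

end Stmt16Aux

/-- trajectories with `τ(S) > i` share their initial segment up to
time `i` with a trajectory of the reduced set `𝒮 \ N_n`; and in the reduced set,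
up-down nodes stay up-down while flat or type I arbitrage nodes become flat. -/
theorem stmt16 (𝒮 : Set (ℕ → ℝ)) (n : ℕ) (hn : 1 ≤ n) :
    (∀ S ∈ 𝒮, ∀ i ≤ n, i < tauN 𝒮 n S →
      ∃ T ∈ 𝒮 \ NSetUpTo 𝒮 n, ∀ k, k ≤ i → S k = T k) ∧
    (∀ i < n, ∀ S ∈ 𝒮 \ NSetUpTo 𝒮 n,
      (UpDownNode 𝒮 S i → UpDownNode (𝒮 \ NSetUpTo 𝒮 n) S i) ∧
      ((FlatNode 𝒮 S i ∨ TypeINode 𝒮 S i) → FlatNode (𝒮 \ NSetUpTo 𝒮 n) S i)) := by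
  constructor
  · intro S hS i hi htau
    obtain ⟨T, hT, hag, htT⟩ := key16 𝒮 n (n - i) i (by omega) S hS htau
    exact ⟨T, ⟨hT, notN_of_tau' 𝒮 n T htT⟩, hag⟩
  · intro i hi S hS
    obtain ⟨hS1, hS2⟩ := hS
    constructor
    · intro hud
      obtain ⟨⟨S₁, hS₁, ha₁, hlt₁⟩, ⟨S₂, hS₂, ha₂, hlt₂⟩⟩ := updown_moves16 𝒮 hud
      have hnTI : ¬ TypeINode 𝒮 S i := fun h => hud.2 h.1
      obtain ⟨T₁, hT₁, hT₁N, hag₁⟩ := transfer16 𝒮 n hi hS1 hS2 hnTI hS₁ ha₁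
      obtain ⟨T₂, hT₂, hT₂N, hag₂⟩ := transfer16 𝒮 n hi hS1 hS2 hnTI hS₂ ha₂
      have haT₁ : agreesUpTo S T₁ i := fun k hk => by
        rw [← hag₁ k (by omega)]; exact ha₁ k hk
      have haT₂ : agreesUpTo S T₂ i := fun k hk => by
        rw [← hag₂ k (by omega)]; exact ha₂ k hk
      have hv₁ : S i < T₁ (i + 1) := by rw [← hag₁ (i + 1) le_rfl]; exact hlt₁
      have hv₂ : T₂ (i + 1) < S i := by rw [← hag₂ (i + 1) le_rfl]; exact hlt₂
      constructor
      · intro hf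
        have := hf T₂ ⟨hT₂, hT₂N⟩ haT₂
        linarith
      · rintro ⟨ε, hε | hε, hall, -⟩ <;> subst hε
        · have := hall T₂ ⟨hT₂, hT₂N⟩ haT₂
          nlinarith
        · have := hall T₁ ⟨hT₁, hT₁N⟩ haT₁
          nlinarith
    · intro hcase S' hS' ha'
      rcases hcase with hflat | hTI
      · exact hflat S' hS'.1 ha'
      · have hTI' : TypeINode 𝒮 S' i :=
          typeI_congr' 𝒮 (fun k hk => (ha' k hk).symm) hTI
        by_contra hne
        have hne' : S' (i + 1) ≠ S' i := by rw [ha' i le_rfl]; exact hne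
        exact hS'.2 ⟨hS'.1, i, hi, hTI', hne'⟩
end
end

section
/- Suppose there exist S⁽⁻⁾, S⁽⁰⁾, S⁽⁺⁾ ∈ S with S⁽⁻⁾_1 < S⁽⁰⁾_1 < S⁽⁺⁾_1, and define f ∈ E by f(S) = S_1 - S⁽⁰⁾_1. If every shifted conditional space S^{(S,1)} admits no strict model-independent arbitrage with simple portfolios (no simple portfolio with zero initial endowment and terminal wealth ≥ 1 everywhere), then |f| ∉ E; in particular E fails to be a vector lattice. -/
open Filter
open scoped ENNReal

noncomputable section

/-- Prepend the value `s0` to a trajectory. -/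
def back (s0 : ℝ) (T : ℕ → ℝ) : ℕ → ℝ
  | 0 => s0
  | k + 1 => T k

/-- if prices at time 1 take at least three values and no shifted
conditional space `𝒮^{(S,1)}` admits a strict model-independent arbitrage with
simple portfolios, then the absolute value of `f(S) = S₁ - S⁽⁰⁾₁` is not the
terminal wealth of any simple portfolio; in particular `E` is not a lattice. -/
theorem stmt19 (𝒮 : Set (ℕ → ℝ)) (s0 : ℝ) (h0 : ∀ S ∈ 𝒮, S 0 = s0)
    (Sm S0 Sp : ℕ → ℝ) (hSm : Sm ∈ 𝒮) (hS0 : S0 ∈ 𝒮) (hSp : Sp ∈ 𝒮)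
    (hlt1 : Sm 1 < S0 1) (hlt2 : S0 1 < Sp 1)
    (hna : ∀ S ∈ 𝒮, ¬ ∃ P : SimplePortfolio, P.V = 0 ∧
      ∀ T ∈ shiftedSpace 𝒮 S 1, 1 ≤ P.wealth T) :
    ¬ ∃ P : SimplePortfolio, ∀ S ∈ 𝒮, |S 1 - S0 1| = P.wealth S := by
  rintro ⟨P, hP⟩
  cases hn : P.n with
  | zero =>
      have kA := hP Sm hSm
      have kB := hP S0 hS0
      simp only [SimplePortfolio.wealth, hn, Finset.range_zero, Finset.sum_empty,
        add_zero] at kA kB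
      rw [sub_self, abs_zero] at kB
      have : Sm 1 = S0 1 := by
        have h' : |Sm 1 - S0 1| = 0 := by rw [kA, ← kB]
        have := abs_eq_zero.mp h'
        linarith
      linarith
  | succ n =>
    have hH0 : ∀ S : ℕ → ℝ, S 0 = s0 → P.H 0 S = P.H 0 S0 := by
      intro S hS
      refine P.nonanticipating 0 S S0 ?_
      intro k hk
      interval_cases k
      rw [hS, h0 S0 hS0]
    have key : ∀ S ∈ 𝒮, |S 1 - S0 1| = P.V + P.H 0 S0 * (S 1 - s0) := by
      intro S hS
      by_contra hne
      obtain ⟨c, hcdef⟩ : ∃ c : ℝ, c = |S 1 - S0 1| - P.V - P.H 0 S0 * (S 1 - s0) :=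
        ⟨_, rfl⟩
      have hc : c ≠ 0 := by
        intro h
        apply hne
        rw [h] at hcdef
        linarith
      apply hna S hS
      refine ⟨⟨0, n, fun i T => c⁻¹ * P.H (i + 1) (back s0 T), ?_⟩, rfl, ?_⟩
      · intro i T T' hTT'
        have : P.H (i + 1) (back s0 T) = P.H (i + 1) (back s0 T') := by
          refine P.nonanticipating (i + 1) _ _ ?_
          intro k hk
          cases k with
          | zero => rfl
          | succ m =>
              show T m = T' m
              exact hTT' m (by omega)
        simp [this]
      · rintro T ⟨S', hS', hagree, hT⟩
        have hback : back s0 T = S' := by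
          funext k
          cases k with
          | zero => exact (h0 S' hS').symm
          | succ m =>
              show T m = S' (m + 1)
              rw [hT m, Nat.add_comm]
        have hS'1 : S' 1 = S 1 := hagree 1 le_rfl
        have hS'0 : S' 0 = s0 := h0 S' hS'
        have hwP := hP S' hS'
        have hsum : ∑ i ∈ Finset.range (n + 1), P.H i S' * (S' (i + 1) - S' i)
            = (∑ i ∈ Finset.range n, P.H (i + 1) S' * (S' (i + 2) - S' (i + 1)))
              + P.H 0 S' * (S' 1 - S' 0) :=
          Finset.sum_range_succ' (fun i => P.H i S' * (S' (i + 1) - S' i)) n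
        have htail : ∑ i ∈ Finset.range n, P.H (i + 1) S' * (S' (i + 2) - S' (i + 1)) = c := by
          have hw : |S' 1 - S0 1| = P.V +
              ∑ i ∈ Finset.range (n + 1), P.H i S' * (S' (i + 1) - S' i) := by
            rw [hwP]; simp [SimplePortfolio.wealth, hn]
          rw [hsum, hH0 S' hS'0, hS'0] at hw
          rw [hcdef, ← hS'1]
          linarith
        show (1 : ℝ) ≤ 0 + ∑ i ∈ Finset.range n,
          (c⁻¹ * P.H (i + 1) (back s0 T)) * (T (i + 1) - T i)
        have : ∀ i, (c⁻¹ * P.H (i + 1) (back s0 T)) * (T (i + 1) - T i)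
            = c⁻¹ * (P.H (i + 1) S' * (S' (i + 2) - S' (i + 1))) := by
          intro i
          rw [hback, hT (i + 1), hT i,
            show 1 + (i + 1) = i + 2 from by omega, show 1 + i = i + 1 from by omega]
          ring
        rw [Finset.sum_congr rfl (fun i _ => this i), ← Finset.mul_sum, htail,
          inv_mul_cancel₀ hc]
        norm_num
    have kA := key Sm hSm
    have kB := key S0 hS0
    have kC := key Sp hSp
    rw [sub_self, abs_zero] at kB
    rw [abs_of_neg (by linarith : Sm 1 - S0 1 < 0)] at kA
    rw [abs_of_pos (by linarith : 0 < Sp 1 - S0 1)] at kC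
    have e1 : (P.H 0 S0 - 1) * (Sp 1 - S0 1) = 0 := by linear_combination kB - kC
    rcases mul_eq_zero.mp e1 with h1 | h1
    · have hh : P.H 0 S0 = 1 := by linarith
      rw [hh, one_mul] at kA kB
      linarith
    · linarith
end
end
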